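/- Let A be an n×n irreducible nonnegative matrix. The maximum cycle geometric mean λ(A) = max over cycles C of (∏_{(i,j)∈C} a_{ij})^{1/length(C)} is a max-algebraic eigenvalue of A: there exists a nonzero nonnegative vector x with max_j a_{ij} x_j = λ(A)·x_i for all i. -/

import Mathlib

open scoped NNReal

/-- Max-times matrix product. -/
noncomputable def maxMul {n : ℕ} (A B : Matrix (Fin n) (Fin n) ℝ≥0) : Matrix (Fin n) (Fin n) ℝ≥0 :=
  fun i j => Finset.univ.sup fun k => A i k * B k j

/-- Max-times matrix power. -/
noncomputable def maxPow {n : ℕ} (A : Matrix (Fin n) (Fin n) ℝ≥0) : ℕ → Matrix (Fin n) (Fin n) ℝ≥0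
  | 0 => fun i j => if i = j then 1 else 0
  | (k+1) => maxMul (maxPow A k) A

/-- Max-times matrix-vector product. -/
noncomputable def maxVec {n : ℕ} (A : Matrix (Fin n) (Fin n) ℝ≥0) (x : Fin n → ℝ≥0) : Fin n → ℝ≥0 :=
  fun i => Finset.univ.sup fun j => A i j * x j

/-- Weight of the cycle visiting `c 0, c 1, ..., c m, c 0` (indices cyclic in `Fin (m+1)`). -/
noncomputable def cycleWeight {n m : ℕ} (A : Matrix (Fin n) (Fin n) ℝ≥0) (c : Fin (m+1) → Fin n) : ℝ≥0 :=
  ∏ i : Fin (m+1), A (c i) (c (i + 1))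

/-- Kleene star `I ⊕ A ⊕ ... ⊕ A^{n-1}`. -/
noncomputable def kleeneStar {n : ℕ} (A : Matrix (Fin n) (Fin n) ℝ≥0) : Matrix (Fin n) (Fin n) ℝ≥0 :=
  fun i j => (Finset.range n).sup fun k => maxPow A k i j

/-- A matrix is irreducible if its digraph is strongly connected. -/
def IrreducibleMat {n : ℕ} (A : Matrix (Fin n) (Fin n) ℝ≥0) : Prop :=
  ∀ i j : Fin n, ∃ t : ℕ, 0 < t ∧ 0 < maxPow A t i j

/-- The set of geometric means of the cycles of `A`. -/
def cycleMeans {n : ℕ} (A : Matrix (Fin n) (Fin n) ℝ≥0) : Set ℝ≥0 :=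
  {r | ∃ (m : ℕ) (c : Fin (m+1) → Fin n), (∀ i, 0 < A (c i) (c (i + 1))) ∧
    r = (cycleWeight A c) ^ ((1 : ℝ) / (m + 1))}

/-! ### Auxiliary lemmas -/

open scoped ENNReal

section Aux

variable {n : ℕ}

lemma maxPow_zero (A : Matrix (Fin n) (Fin n) ℝ≥0) (i j : Fin n) :
    maxPow A 0 i j = if i = j then 1 else 0 := rfl

lemma maxMul_id_left (A B : Matrix (Fin n) (Fin n) ℝ≥0) :
    maxMul (maxPow A 0) B = B := by
  funext i j
  apply le_antisymm
  · apply Finset.sup_le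
    intro m _
    by_cases h : i = m
    · subst h; simp [maxPow_zero]
    · simp [maxPow_zero, h]
  · refine le_trans ?_ (Finset.le_sup (f := fun m => maxPow A 0 i m * B m j) (Finset.mem_univ i))
    simp [maxPow_zero]

lemma maxMul_id_right (A B : Matrix (Fin n) (Fin n) ℝ≥0) :
    maxMul B (maxPow A 0) = B := by
  funext i j
  apply le_antisymm
  · apply Finset.sup_le
    intro m _
    by_cases h : m = j
    · subst h; simp [maxPow_zero]
    · simp [maxPow_zero, h]
  · refine le_trans ?_ (Finset.le_sup (f := fun m => B i m * maxPow A 0 m j) (Finset.mem_univ j))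
    simp [maxPow_zero]

lemma maxMul_assoc (A B C : Matrix (Fin n) (Fin n) ℝ≥0) :
    maxMul (maxMul A B) C = maxMul A (maxMul B C) := by
  funext i j
  show (Finset.univ.sup fun l => (Finset.univ.sup fun m => A i m * B m l) * C l j)
      = Finset.univ.sup fun m => A i m * Finset.univ.sup fun l => B m l * C l j
  simp only [NNReal.finset_sup_mul, NNReal.mul_finset_sup]
  rw [Finset.sup_comm]
  simp only [mul_assoc]

lemma maxPow_succ_left (A : Matrix (Fin n) (Fin n) ℝ≥0) (t : ℕ) :
    maxPow A (t+1) = maxMul A (maxPow A t) := by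
  induction t with
  | zero =>
      show maxMul (maxPow A 0) A = maxMul A (maxPow A 0)
      rw [maxMul_id_left, maxMul_id_right]
  | succ t ih =>
      show maxMul (maxPow A (t+1)) A = maxMul A (maxPow A (t+1))
      calc maxMul (maxPow A (t+1)) A = maxMul (maxMul A (maxPow A t)) A := by rw [ih]
        _ = maxMul A (maxMul (maxPow A t) A) := maxMul_assoc ..
        _ = maxMul A (maxPow A (t+1)) := rfl

lemma maxPow_one (A : Matrix (Fin n) (Fin n) ℝ≥0) : maxPow A 1 = A := by
  rw [maxPow_succ_left, maxMul_id_right]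

lemma maxPow_mul_maxPow (A : Matrix (Fin n) (Fin n) ℝ≥0) (a b : ℕ) (i j l : Fin n) :
    maxPow A a i j * maxPow A b j l ≤ maxPow A (a+b) i l := by
  induction b generalizing l with
  | zero =>
      by_cases h : j = l
      · subst h
        rw [Nat.add_zero, maxPow_zero]
        simp
      · rw [Nat.add_zero, maxPow_zero]
        simp [h]
  | succ b ih =>
      show maxPow A a i j * (Finset.univ.sup fun m => maxPow A b j m * A m l) ≤
        Finset.univ.sup fun m => maxPow A (a+b) i m * A m l
      rw [NNReal.mul_finset_sup]
      apply Finset.sup_le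
      intro m _
      calc maxPow A a i j * (maxPow A b j m * A m l)
          = maxPow A a i j * maxPow A b j m * A m l := (mul_assoc ..).symm
        _ ≤ maxPow A (a+b) i m * A m l := mul_le_mul_left (ih m) _
        _ ≤ _ := Finset.le_sup (f := fun m => maxPow A (a+b) i m * A m l) (Finset.mem_univ m)

lemma walk_le_maxPow (A : Matrix (Fin n) (Fin n) ℝ≥0) (p : ℕ → Fin n) (t : ℕ) :
    ∏ s ∈ Finset.range (t+1), A (p s) (p (s+1)) ≤ maxPow A (t+1) (p 0) (p (t+1)) := by
  induction t with
  | zero => simp [maxPow_one]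
  | succ t ih =>
      rw [Finset.prod_range_succ]
      show _ ≤ Finset.univ.sup fun m => maxPow A (t+1) (p 0) m * A m (p (t+2))
      calc (∏ s ∈ Finset.range (t+1), A (p s) (p (s+1))) * A (p (t+1)) (p (t+2))
          ≤ maxPow A (t+1) (p 0) (p (t+1)) * A (p (t+1)) (p (t+2)) := mul_le_mul_left ih _
        _ ≤ _ := Finset.le_sup (f := fun m => maxPow A (t+1) (p 0) m * A m (p (t+2)))
          (Finset.mem_univ (p (t+1)))

lemma maxPow_exists_walk (A : Matrix (Fin n) (Fin n) ℝ≥0) (hn : 0 < n) (t : ℕ) (i j : Fin n) :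
    ∃ p : ℕ → Fin n, p 0 = i ∧ p (t+1) = j ∧
      maxPow A (t+1) i j = ∏ s ∈ Finset.range (t+1), A (p s) (p (s+1)) := by
  induction t generalizing j with
  | zero =>
      refine ⟨fun s => if s = 0 then i else j, rfl, by simp, ?_⟩
      simp [maxPow_one]
  | succ t ih =>
      have hne : (Finset.univ : Finset (Fin n)).Nonempty := ⟨⟨0, hn⟩, Finset.mem_univ _⟩
      obtain ⟨m, -, hm⟩ := Finset.exists_mem_eq_sup Finset.univ hne
        (fun m => maxPow A (t+1) i m * A m j)
      obtain ⟨p, hp0, hp1, hpe⟩ := ih m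
      refine ⟨fun s => if s = t+2 then j else p s, by simp [hp0], by simp, ?_⟩
      have hstep : maxPow A (t+2) i j = maxPow A (t+1) i m * A m j := hm
      rw [hstep, Finset.prod_range_succ]
      have h1 : ∀ s ∈ Finset.range (t+1),
          A ((fun s => if s = t+2 then j else p s) s) ((fun s => if s = t+2 then j else p s) (s+1))
          = A (p s) (p (s+1)) := by
        intro s hs
        have hs' := Finset.mem_range.mp hs
        have h2 : s ≠ t+2 := by omega
        have h3 : s+1 ≠ t+2 := by omega
        simp [h2, h3, show s ≠ t+1 by omega]
      rw [Finset.prod_congr rfl h1, hpe]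
      have h4 : (t+1 : ℕ) ≠ t+2 := by omega
      simp [h4, hp1]

lemma fin_add_one_val {t : ℕ} (u : Fin (t+1)) :
    ((u + 1 : Fin (t+1))).val = (u.val + 1) % (t+1) := by
  rw [Fin.add_def, Fin.val_one']
  conv_rhs => rw [Nat.add_mod, Nat.mod_eq_of_lt u.isLt]

lemma nnreal_rpow_cancel (w : ℝ≥0) (t : ℕ) : (w ^ ((1:ℝ)/(t+1))) ^ (t+1) = w := by
  rw [← NNReal.rpow_natCast (w ^ ((1:ℝ)/(t+1))) (t+1), ← NNReal.rpow_mul]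
  have h : (1:ℝ)/((t:ℝ)+1) * ((t+1 : ℕ):ℝ) = 1 := by
    push_cast
    field_simp
  rw [show ((1:ℝ)/(t+1)) * ((t+1 : ℕ):ℝ) = 1 from h, NNReal.rpow_one]

end Aux

/-- The maximum cycle geometric mean of an irreducible nonnegative matrix is a
max-algebraic eigenvalue. -/
theorem max_cycle_mean_is_eigenvalue {n : ℕ} (A : Matrix (Fin n) (Fin n) ℝ≥0)
    (hirr : IrreducibleMat A) (lam : ℝ≥0) (hlam : IsGreatest (cycleMeans A) lam) :
    ∃ x : Fin n → ℝ≥0, x ≠ 0 ∧ ∀ i, maxVec A x i = lam * x i := by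
  obtain ⟨⟨m, c, hcpos, hceq⟩, hub⟩ := hlam
  set k : Fin n := c 0 with hk
  have hn : 0 < n := k.pos
  -- positivity of lam
  have hwpos : 0 < cycleWeight A c := by
    rw [cycleWeight]
    exact CanonicallyOrderedAdd.prod_pos.mpr (fun i _ => hcpos i)
  have hlampos : 0 < lam := by
    rw [hceq]
    exact NNReal.rpow_pos hwpos
  have hlam0 : lam ≠ 0 := hlampos.ne'
  -- lam ^ (m+1) = cycleWeight A c
  have hpow : lam ^ (m+1) = cycleWeight A c := by
    rw [hceq]
    exact nnreal_rpow_cancel _ _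
  -- every closed walk has weight at most lam ^ length
  have hubcycle : ∀ (t : ℕ) (p : ℕ → Fin n), p (t+1) = p 0 →
      ∏ s ∈ Finset.range (t+1), A (p s) (p (s+1)) ≤ lam ^ (t+1) := by
    intro t p hclosed
    rcases eq_or_ne (∏ s ∈ Finset.range (t+1), A (p s) (p (s+1))) 0 with h0 | h0
    · rw [h0]; exact zero_le
    set d : Fin (t+1) → Fin n := fun u => p u.val with hd
    have hedge : ∀ u : Fin (t+1), A (d u) (d (u+1)) = A (p u.val) (p (u.val + 1)) := by
      intro u
      have hval := fin_add_one_val u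
      rcases lt_or_eq_of_le (Nat.lt_succ_iff.mp u.isLt) with hu | hu
      · have h1 : ((u + 1 : Fin (t+1))).val = u.val + 1 := by
          rw [hval, Nat.mod_eq_of_lt (by omega)]
        show A (p u.val) (p ((u + 1 : Fin (t+1))).val) = _
        rw [h1]
      · have h1 : ((u + 1 : Fin (t+1))).val = 0 := by
          rw [hval, hu, Nat.mod_self]
        show A (p u.val) (p ((u + 1 : Fin (t+1))).val) = _
        rw [h1, ← hclosed, hu]
    have hwcycle : cycleWeight A d = ∏ s ∈ Finset.range (t+1), A (p s) (p (s+1)) := by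
      rw [cycleWeight]
      calc ∏ u : Fin (t+1), A (d u) (d (u+1))
          = ∏ u : Fin (t+1), A (p u.val) (p (u.val+1)) :=
            Finset.prod_congr rfl (fun u _ => hedge u)
        _ = ∏ s ∈ Finset.range (t+1), A (p s) (p (s+1)) :=
            Fin.prod_univ_eq_prod_range (fun s => A (p s) (p (s+1))) (t+1)
    have hdpos : ∀ u, 0 < A (d u) (d (u+1)) := by
      have hne : cycleWeight A d ≠ 0 := by rw [hwcycle]; exact h0
      rw [cycleWeight] at hne
      intro u
      exact pos_iff_ne_zero.mpr (Finset.prod_ne_zero_iff.mp hne u (Finset.mem_univ u))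
    have hmem : (cycleWeight A d) ^ ((1:ℝ)/(t+1)) ∈ cycleMeans A := ⟨t, d, hdpos, rfl⟩
    have hle := hub hmem
    calc ∏ s ∈ Finset.range (t+1), A (p s) (p (s+1))
        = cycleWeight A d := hwcycle.symm
      _ = ((cycleWeight A d) ^ ((1:ℝ)/(t+1))) ^ (t+1) := (nnreal_rpow_cancel _ _).symm
      _ ≤ lam ^ (t+1) := pow_le_pow_left₀ zero_le hle _
  -- matrix-level closed walk bound
  have hclosedP : ∀ (t : ℕ) (i : Fin n), maxPow A (t+1) i i ≤ lam ^ (t+1) := by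
    intro t i
    obtain ⟨p, hp0, hp1, hpe⟩ := maxPow_exists_walk A hn t i i
    rw [hpe]
    exact hubcycle t p (by rw [hp0, hp1])
  -- critical bound
  have hcrit : lam ^ (m+1) ≤ maxPow A (m+1) k k := by
    set p : ℕ → Fin n := fun s => c ⟨s % (m+1), Nat.mod_lt _ (Nat.succ_pos m)⟩ with hp
    have hp0 : p 0 = k := by
      show c ⟨0 % (m+1), _⟩ = c 0
      exact congrArg c (Fin.ext (by simp))
    have hp1 : p (m+1) = k := by
      show c ⟨(m+1) % (m+1), _⟩ = c 0
      exact congrArg c (Fin.ext (by simp))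
    have hprod : ∏ s ∈ Finset.range (m+1), A (p s) (p (s+1)) = cycleWeight A c := by
      rw [cycleWeight]
      refine (Fin.prod_univ_eq_prod_range (fun s => A (p s) (p (s+1))) (m+1)).symm.trans ?_
      refine Finset.prod_congr rfl (fun u _ => ?_)
      have h1 : p u.val = c u := by
        show c ⟨u.val % (m+1), _⟩ = c u
        exact congrArg c (Fin.ext (Nat.mod_eq_of_lt u.isLt))
      have h2 : p (u.val + 1) = c (u + 1) := by
        show c ⟨(u.val + 1) % (m+1), _⟩ = c (u+1)
        exact congrArg c (Fin.ext (fin_add_one_val u).symm)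
      rw [h1, h2]
    calc lam ^ (m+1) = cycleWeight A c := hpow
      _ = ∏ s ∈ Finset.range (m+1), A (p s) (p (s+1)) := hprod.symm
      _ ≤ maxPow A (m+1) (p 0) (p (m+1)) := walk_le_maxPow A p m
      _ = maxPow A (m+1) k k := by rw [hp0, hp1]
  -- move to ℝ≥0∞
  have hL0 : (lam : ℝ≥0∞) ≠ 0 := by exact_mod_cast hlam0
  have hLt : (lam : ℝ≥0∞) ≠ ⊤ := ENNReal.coe_ne_top
  set g : ℕ → Fin n → ℝ≥0∞ :=
    fun t j => (maxPow A (t+1) j k : ℝ≥0∞) / (lam : ℝ≥0∞)^(t+1) with hg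
  set X : Fin n → ℝ≥0∞ := fun j => ⨆ t, g t j with hX
  -- appending the critical cycle does not decrease g
  have hshift : ∀ t j, g t j ≤ g (t + (m+1)) j := by
    intro t j
    have h1 : maxPow A (t+1) j k * lam ^ (m+1) ≤ maxPow A (t+1+(m+1)) j k :=
      calc maxPow A (t+1) j k * lam ^ (m+1)
          ≤ maxPow A (t+1) j k * maxPow A (m+1) k k := mul_le_mul_right hcrit _
        _ ≤ _ := maxPow_mul_maxPow A (t+1) (m+1) j k k
    have h2 : (maxPow A (t+1) j k : ℝ≥0∞) * (lam : ℝ≥0∞)^(m+1)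
        ≤ (maxPow A (t+1+(m+1)) j k : ℝ≥0∞) := by exact_mod_cast h1
    show (maxPow A (t+1) j k : ℝ≥0∞) / (lam : ℝ≥0∞)^(t+1)
        ≤ (maxPow A (t+(m+1)+1) j k : ℝ≥0∞) / (lam : ℝ≥0∞)^(t+(m+1)+1)
    have harr : t + (m+1) + 1 = t+1+(m+1) := by omega
    rw [harr]
    calc (maxPow A (t+1) j k : ℝ≥0∞) / (lam : ℝ≥0∞)^(t+1)
        = ((maxPow A (t+1) j k : ℝ≥0∞) * (lam : ℝ≥0∞)^(m+1)) /
            ((lam : ℝ≥0∞)^(t+1) * (lam : ℝ≥0∞)^(m+1)) :=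
          (ENNReal.mul_div_mul_right _ _ (pow_ne_zero _ hL0) (ENNReal.pow_ne_top hLt)).symm
      _ ≤ (maxPow A (t+1+(m+1)) j k : ℝ≥0∞) /
            ((lam : ℝ≥0∞)^(t+1) * (lam : ℝ≥0∞)^(m+1)) := ENNReal.div_le_div_right h2 _
      _ = (maxPow A (t+1+(m+1)) j k : ℝ≥0∞) / (lam : ℝ≥0∞)^(t+1+(m+1)) := by rw [← pow_add]
  -- X is finite
  have hXfin : ∀ j, X j ≠ ⊤ := by
    intro j
    obtain ⟨s, hs, hsp⟩ := hirr k j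
    have hbd : ∀ t, g t j ≤ ((lam ^ s / maxPow A s k j : ℝ≥0) : ℝ≥0∞) := by
      intro t
      have e : t + 1 + s = (t + s) + 1 := by omega
      have h1 : maxPow A (t+1) j k * maxPow A s k j ≤ lam ^ (t+1+s) :=
        calc maxPow A (t+1) j k * maxPow A s k j
            ≤ maxPow A (t+1+s) j j := maxPow_mul_maxPow A (t+1) s j k j
          _ = maxPow A ((t+s)+1) j j := by rw [e]
          _ ≤ lam ^ ((t+s)+1) := hclosedP (t+s) j
          _ = lam ^ (t+1+s) := by rw [e]
      have h2 : maxPow A (t+1) j k ≤ (lam ^ s / maxPow A s k j) * lam ^ (t+1) := by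
        rw [div_mul_eq_mul_div, le_div_iff₀ hsp]
        calc maxPow A (t+1) j k * maxPow A s k j ≤ lam ^ (t+1+s) := h1
          _ = lam ^ s * lam ^ (t+1) := by rw [← pow_add, Nat.add_comm s (t+1)]
      apply ENNReal.div_le_of_le_mul
      exact_mod_cast h2
    exact ne_top_of_le_ne_top ENNReal.coe_ne_top (iSup_le hbd)
  -- X k = 1
  have hXk : X k = 1 := by
    apply le_antisymm
    · apply iSup_le
      intro t
      apply ENNReal.div_le_of_le_mul
      rw [one_mul]
      exact_mod_cast hclosedP t k
    · refine le_trans ?_ (le_iSup (fun t => g t k) m)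
      show (1 : ℝ≥0∞) ≤ (maxPow A (m+1) k k : ℝ≥0∞) / (lam : ℝ≥0∞)^(m+1)
      rw [ENNReal.le_div_iff_mul_le (Or.inl (pow_ne_zero _ hL0))
        (Or.inl (ENNReal.pow_ne_top hLt)), one_mul]
      exact_mod_cast hcrit
  -- the key step
  have hstep : ∀ (t : ℕ) (i : Fin n), (⨆ j, (A i j : ℝ≥0∞) * g t j)
      = (maxPow A (t+2) i k : ℝ≥0∞) / (lam : ℝ≥0∞)^(t+1) := by
    intro t i
    have h1 : ∀ j, (A i j : ℝ≥0∞) * g t j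
        = ((A i j * maxPow A (t+1) j k : ℝ≥0) : ℝ≥0∞) / (lam : ℝ≥0∞)^(t+1) := by
      intro j
      show (A i j : ℝ≥0∞) * ((maxPow A (t+1) j k : ℝ≥0∞) / (lam : ℝ≥0∞)^(t+1)) = _
      rw [ENNReal.coe_mul, ← mul_div_assoc]
    rw [iSup_congr h1, ← ENNReal.iSup_div]
    congr 1
    have h2 : maxPow A (t+2) i k = Finset.univ.sup (fun j => A i j * maxPow A (t+1) j k) := by
      rw [maxPow_succ_left]
      rfl
    rw [h2, ENNReal.coe_finset_sup, Finset.sup_eq_iSup]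
    simp
  have hLg : ∀ (t : ℕ) (i : Fin n),
      (maxPow A (t+2) i k : ℝ≥0∞) / (lam : ℝ≥0∞)^(t+1) = (lam : ℝ≥0∞) * g (t+1) i := by
    intro t i
    show _ = (lam : ℝ≥0∞) * ((maxPow A (t+2) i k : ℝ≥0∞) / (lam : ℝ≥0∞)^(t+2))
    rw [show ((lam : ℝ≥0∞))^(t+2) = (lam : ℝ≥0∞)^(t+1) * (lam : ℝ≥0∞) from pow_succ _ _,
      ← mul_div_assoc, mul_comm ((lam : ℝ≥0∞)) ((maxPow A (t+2) i k : ℝ≥0∞)),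
      ENNReal.mul_div_mul_right _ _ hL0 hLt]
  have hkey : ∀ i, (⨆ j, (A i j : ℝ≥0∞) * X j) = (lam : ℝ≥0∞) * X i := by
    intro i
    calc (⨆ j, (A i j : ℝ≥0∞) * X j)
        = ⨆ j, ⨆ t, (A i j : ℝ≥0∞) * g t j :=
          iSup_congr fun j => ENNReal.mul_iSup _ _
      _ = ⨆ t, ⨆ j, (A i j : ℝ≥0∞) * g t j := iSup_comm
      _ = ⨆ t, (lam : ℝ≥0∞) * g (t+1) i :=
          iSup_congr fun t => (hstep t i).trans (hLg t i)
      _ = (lam : ℝ≥0∞) * ⨆ t, g (t+1) i := (ENNReal.mul_iSup _ _).symm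
      _ = (lam : ℝ≥0∞) * X i := by
          congr 1
          apply le_antisymm
          · exact iSup_le fun t => le_iSup (fun t => g t i) (t+1)
          · apply iSup_le
            intro t
            exact le_trans (hshift t i) (le_iSup (fun t => g (t+1) i) (t+m))
  -- conclude
  refine ⟨fun j => (X j).toNNReal, ?_, ?_⟩
  · intro h
    have h1 := congrFun h k
    rw [hXk] at h1
    simp at h1
  · intro i
    have hcoe : ∀ j, (((X j).toNNReal : ℝ≥0) : ℝ≥0∞) = X j :=
      fun j => ENNReal.coe_toNNReal (hXfin j)
    apply ENNReal.coe_injective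
    show ((Finset.univ.sup fun j => A i j * (X j).toNNReal : ℝ≥0) : ℝ≥0∞)
        = ((lam * (X i).toNNReal : ℝ≥0) : ℝ≥0∞)
    rw [ENNReal.coe_finset_sup, ENNReal.coe_mul, hcoe i]
    rw [show (Finset.univ.sup fun j => (((A i j * (X j).toNNReal : ℝ≥0)) : ℝ≥0∞))
        = ⨆ j, (A i j : ℝ≥0∞) * X j by
      rw [Finset.sup_eq_iSup]
      simp [ENNReal.coe_mul, hcoe]]
    exact hkey i
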